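/- Let f : ℝⁿ → ℝ be Lipschitz and differentiable at a point x₀. Then lim_{λ→∞} λ·R_λ(f)(x₀) = 0 and lim_{λ→∞} λ·V_λ(f)(x₀) = 0, where R_λ(f) = f − C^l_λ(f) and V_λ(f) = C^u_λ(f) − f. -/
import Mathlib

open Filter Metric Set
open scoped Topology RealInnerProductSpace

/-- The convex envelope of `g`: pointwise supremum of convex functions below `g`. -/
noncomputable def convEnv {E : Type*} [NormedAddCommGroup E] [NormedSpace ℝ E]
    (g : E → ℝ) (x : E) : ℝ :=
  sSup {y : ℝ | ∃ h : E → ℝ, ConvexOn ℝ Set.univ h ∧ (∀ z, h z ≤ g z) ∧ y = h x}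

/-- Upper compensated convex transform. -/
noncomputable def upperT {E : Type*} [NormedAddCommGroup E] [NormedSpace ℝ E]
    (lam : ℝ) (g : E → ℝ) (x : E) : ℝ :=
  lam * ‖x‖ ^ 2 - convEnv (fun y => lam * ‖y‖ ^ 2 - g y) x

/-- Lower compensated convex transform. -/
noncomputable def lowerT {E : Type*} [NormedAddCommGroup E] [NormedSpace ℝ E]
    (lam : ℝ) (g : E → ℝ) (x : E) : ℝ :=
  convEnv (fun y => g y + lam * ‖y‖ ^ 2) x - lam * ‖x‖ ^ 2


section aux
variable {E : Type*} [NormedAddCommGroup E] [InnerProductSpace ℝ E]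

lemma convexOn_const_add (ψ : E →L[ℝ] ℝ) (c : ℝ) :
    ConvexOn ℝ Set.univ (fun y => c + ψ y) := by
  refine ⟨convex_univ, fun x _ y _ a b ha hb hab => ?_⟩
  simp only [map_add, map_smul, smul_eq_mul]
  have h : a * c + b * c = c := by rw [← add_mul, hab, one_mul]
  nlinarith [h]

lemma convEnv_le (g : E → ℝ) (x : E)
    (h₀ : ∃ h : E → ℝ, ConvexOn ℝ Set.univ h ∧ ∀ z, h z ≤ g z) :
    convEnv g x ≤ g x := by
  obtain ⟨h, hc, hle⟩ := h₀
  refine csSup_le ⟨h x, ⟨h, hc, hle, rfl⟩⟩ ?_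
  rintro y ⟨h', hc', hle', rfl⟩
  exact hle' x

lemma le_convEnv (g : E → ℝ) (x : E) (h : E → ℝ)
    (hc : ConvexOn ℝ Set.univ h) (hle : ∀ z, h z ≤ g z) :
    h x ≤ convEnv g x := by
  apply le_csSup
  · exact ⟨g x, by rintro y ⟨h', hc', hle', rfl⟩; exact hle' x⟩
  · exact ⟨h, hc, hle, rfl⟩
end aux

lemma key_est {n : ℕ} (f : EuclideanSpace ℝ (Fin n) → ℝ) (L : ℝ) (hL : 0 ≤ L)
    (hf : ∀ x y, |f x - f y| ≤ L * ‖x - y‖) (x₀ : EuclideanSpace ℝ (Fin n))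
    (hdiff : DifferentiableAt ℝ f x₀) (ε : ℝ) (hε : 0 < ε) :
    ∃ lam₀ : ℝ, 0 < lam₀ ∧ ∀ lam ≥ lam₀, ∀ y,
      |f y - f x₀ - (fderiv ℝ f x₀) (y - x₀)| ≤ lam * ‖y - x₀‖ ^ 2 + ε / lam := by
  set φ := fderiv ℝ f x₀ with hφ
  have h1 : (fun y => f y - f x₀ - φ (y - x₀)) =o[𝓝 x₀] fun y => y - x₀ :=
    hdiff.hasFDerivAt.isLittleO
  have hsq : (0:ℝ) < Real.sqrt ε := Real.sqrt_pos.mpr hε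
  have h2 := h1.def hsq
  rw [Metric.eventually_nhds_iff] at h2
  obtain ⟨δ, hδ, hδ2⟩ := h2
  set M : ℝ := L + ‖φ‖ with hM
  have hM0 : 0 ≤ M := add_nonneg hL (norm_nonneg _)
  refine ⟨max 1 (M / δ), lt_of_lt_of_le one_pos (le_max_left _ _), fun lam hlam y => ?_⟩
  have hlam1 : (1:ℝ) ≤ lam := le_trans (le_max_left _ _) hlam
  have hlampos : (0:ℝ) < lam := lt_of_lt_of_le one_pos hlam1
  have hlamM : M / δ ≤ lam := le_trans (le_max_right _ _) hlam
  have hεlam : 0 ≤ ε / lam := le_of_lt (div_pos hε hlampos)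
  set r : ℝ := ‖y - x₀‖ with hr
  have hr0 : 0 ≤ r := norm_nonneg _
  by_cases hcase : r < δ
  · have := hδ2 (show dist y x₀ < δ by rwa [dist_eq_norm])
    rw [Real.norm_eq_abs, ← hr] at this
    have h3 : |f y - f x₀ - φ (y - x₀)| ≤ Real.sqrt ε * r := this
    have hdiv : lam * (ε / lam) = ε := mul_div_cancel₀ ε (ne_of_gt hlampos)
    have hsqε : Real.sqrt ε ^ 2 = ε := Real.sq_sqrt hε.le
    nlinarith [sq_nonneg (2 * lam * r - Real.sqrt ε), h3, hlampos, hr0]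
  · push_neg at hcase
    have hEy : |f y - f x₀ - φ (y - x₀)| ≤ M * r := by
      have hb1 : |f y - f x₀| ≤ L * r := hf y x₀
      have hb2 : |φ (y - x₀)| ≤ ‖φ‖ * r := by
        have := φ.le_opNorm (y - x₀)
        rwa [Real.norm_eq_abs] at this
      calc |f y - f x₀ - φ (y - x₀)| ≤ |f y - f x₀| + |φ (y - x₀)| := abs_sub _ _
        _ ≤ L * r + ‖φ‖ * r := add_le_add hb1 hb2
        _ = M * r := by ring
    have hMlam : M ≤ lam * δ := by
      rw [div_le_iff₀ hδ] at hlamM; linarith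
    have : M * r ≤ lam * r ^ 2 := by
      nlinarith [mul_le_mul_of_nonneg_right hMlam hr0,
        mul_le_mul_of_nonneg_left hcase (mul_nonneg hlampos.le hr0)]
    linarith

theorem stmt_3 {n : ℕ} (f : EuclideanSpace ℝ (Fin n) → ℝ) (L : ℝ) (hL : 0 ≤ L)
    (hf : ∀ x y, |f x - f y| ≤ L * ‖x - y‖) (x₀ : EuclideanSpace ℝ (Fin n))
    (hdiff : DifferentiableAt ℝ f x₀) :
    Tendsto (fun lam : ℝ => lam * (f x₀ - lowerT lam f x₀)) atTop (nhds 0) ∧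
    Tendsto (fun lam : ℝ => lam * (upperT lam f x₀ - f x₀)) atTop (nhds 0) := by
  set φ := fderiv ℝ f x₀ with hφ
  constructor
  · rw [NormedAddCommGroup.tendsto_nhds_zero]
    intro ε hε
    obtain ⟨lam₀, hlam₀, hkey⟩ := key_est f L hL hf x₀ hdiff (ε/2) (by positivity)
    rw [eventually_atTop]
    refine ⟨lam₀, fun lam hlam => ?_⟩
    have hlampos : (0:ℝ) < lam := lt_of_lt_of_le hlam₀ hlam
    set ψ : EuclideanSpace ℝ (Fin n) →L[ℝ] ℝ :=
      φ + (2*lam) • ((innerSL ℝ) x₀) with hψdef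
    set c : ℝ := f x₀ + lam*‖x₀‖^2 - (ε/2)/lam - ψ x₀ with hc
    have hconv := convexOn_const_add ψ c
    have hle : ∀ z, c + ψ z ≤ f z + lam * ‖z‖^2 := by
      intro z
      have hk := abs_le.mp (hkey lam hlam z)
      have hψz : ψ z - ψ x₀ = φ (z - x₀) + 2*lam*⟪x₀, z - x₀⟫ := by
        rw [← map_sub]
        simp only [hψdef, ContinuousLinearMap.add_apply, ContinuousLinearMap.smul_apply,
          innerSL_apply_apply, smul_eq_mul]
      have hnorm : ‖z‖^2 = ‖x₀‖^2 + 2*⟪x₀, z - x₀⟫ + ‖z - x₀‖^2 := by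
        have h := norm_add_sq_real x₀ (z - x₀)
        rw [show x₀ + (z - x₀) = z by abel] at h
        exact h
      have hnorm2 : lam * ‖z‖^2 = lam*‖x₀‖^2 + 2*lam*⟪x₀, z - x₀⟫ + lam*‖z - x₀‖^2 := by
        rw [hnorm]; ring
      have h1 := hk.1
      rw [← hφ] at h1
      clear_value ψ c
      linarith
    have hub : convEnv (fun y => f y + lam * ‖y‖^2) x₀ ≤ f x₀ + lam * ‖x₀‖^2 :=
      convEnv_le _ x₀ ⟨fun y => c + ψ y, hconv, hle⟩
    have hlb : c + ψ x₀ ≤ convEnv (fun y => f y + lam * ‖y‖^2) x₀ :=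
      le_convEnv _ x₀ _ hconv hle
    have hlow : lowerT lam f x₀ = convEnv (fun y => f y + lam * ‖y‖^2) x₀ - lam * ‖x₀‖^2 := rfl
    have h0 : 0 ≤ f x₀ - lowerT lam f x₀ := by rw [hlow]; linarith
    have h1 : f x₀ - lowerT lam f x₀ ≤ (ε/2)/lam := by rw [hlow]; rw [hc] at hlb; linarith
    have hcancel : lam * ((ε/2)/lam) = ε/2 := mul_div_cancel₀ _ (ne_of_gt hlampos)
    rw [Real.norm_eq_abs, abs_of_nonneg (mul_nonneg hlampos.le h0)]
    have := mul_le_mul_of_nonneg_left h1 hlampos.le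
    linarith
  · rw [NormedAddCommGroup.tendsto_nhds_zero]
    intro ε hε
    obtain ⟨lam₀, hlam₀, hkey⟩ := key_est f L hL hf x₀ hdiff (ε/2) (by positivity)
    rw [eventually_atTop]
    refine ⟨lam₀, fun lam hlam => ?_⟩
    have hlampos : (0:ℝ) < lam := lt_of_lt_of_le hlam₀ hlam
    set ψ : EuclideanSpace ℝ (Fin n) →L[ℝ] ℝ :=
      (-φ) + (2*lam) • ((innerSL ℝ) x₀) with hψdef
    set c : ℝ := lam*‖x₀‖^2 - f x₀ - (ε/2)/lam - ψ x₀ with hc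
    have hconv := convexOn_const_add ψ c
    have hle : ∀ z, c + ψ z ≤ lam * ‖z‖^2 - f z := by
      intro z
      have hk := abs_le.mp (hkey lam hlam z)
      have hψz : ψ z - ψ x₀ = -(φ (z - x₀)) + 2*lam*⟪x₀, z - x₀⟫ := by
        rw [← map_sub]
        simp only [hψdef, ContinuousLinearMap.add_apply, ContinuousLinearMap.smul_apply,
          ContinuousLinearMap.neg_apply, innerSL_apply_apply, smul_eq_mul]
      have hnorm : ‖z‖^2 = ‖x₀‖^2 + 2*⟪x₀, z - x₀⟫ + ‖z - x₀‖^2 := by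
        have h := norm_add_sq_real x₀ (z - x₀)
        rw [show x₀ + (z - x₀) = z by abel] at h
        exact h
      have hnorm2 : lam * ‖z‖^2 = lam*‖x₀‖^2 + 2*lam*⟪x₀, z - x₀⟫ + lam*‖z - x₀‖^2 := by
        rw [hnorm]; ring
      have h2 := hk.2
      rw [← hφ] at h2
      clear_value ψ c
      linarith
    have hub : convEnv (fun y => lam * ‖y‖^2 - f y) x₀ ≤ lam * ‖x₀‖^2 - f x₀ :=
      convEnv_le _ x₀ ⟨fun y => c + ψ y, hconv, hle⟩
    have hlb : c + ψ x₀ ≤ convEnv (fun y => lam * ‖y‖^2 - f y) x₀ :=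
      le_convEnv _ x₀ _ hconv hle
    have hup : upperT lam f x₀ = lam * ‖x₀‖^2 - convEnv (fun y => lam * ‖y‖^2 - f y) x₀ := rfl
    have h0 : 0 ≤ upperT lam f x₀ - f x₀ := by rw [hup]; linarith
    have h1 : upperT lam f x₀ - f x₀ ≤ (ε/2)/lam := by rw [hup]; rw [hc] at hlb; linarith
    have hcancel : lam * ((ε/2)/lam) = ε/2 := mul_div_cancel₀ _ (ne_of_gt hlampos)
    rw [Real.norm_eq_abs, abs_of_nonneg (mul_nonneg hlampos.le h0)]
    have := mul_le_mul_of_nonneg_left h1 hlampos.le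
    linarith
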